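/- arXiv:1011.3473 — 6 statements merged into one kernel-verified Lean document; each statement's English description precedes it below -/
import Mathlib

section
/- Let L be a Lie algebra over ℂ and let e, h, f ∈ L satisfy the sl₂-triple relations [h,e] = 2e, [h,f] = −2f, [e,f] = h. Then for every natural number m, in the universal enveloping algebra U(L) one has (ad e)^m(f^m) − m!·h(h−1)(h−2)⋯(h−m+1) ∈ U(L)·e, where U(L)·e is the left ideal generated by (the image of) e, ad e is the operator x ↦ ex − xe on U(L), and h(h−1)⋯(h−m+1) denotes the product of the m elements h − i (0 ≤ i ≤ m−1) of U(L). -/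
/-! Work in an arbitrary ring `A` containing an sl₂-triple, modulo the left ideal `A e`.
Since `e h = (h - 2) e`, the element `e` passes through any polynomial in `h` at the cost of a shift
of the variable, so `⁅e, p(h)⁆ ∈ A e`; moreover `⁅e, ·⁆` maps `A e` into itself. Combined with
`⁅e, f ^ (n + 1)⁆ = (n + 1) f ^ n (h - n)`, an induction on `j` gives
`(ad e) ^ j (f ^ (a + j)) ≡ (a + j)⋯(a + 1) • f ^ a (h - a)(h - a - 1)⋯(h - a - j + 1)  mod A e`,
and `a = 0` is the theorem. -/

/-- The canonical embedding of a Lie algebra into its universal enveloping algebra. -/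
noncomputable def ιU {L : Type*} [LieRing L] [LieAlgebra ℂ L] (x : L) :
    UniversalEnvelopingAlgebra ℂ L :=
  UniversalEnvelopingAlgebra.ι ℂ x

open Polynomial Nat

attribute [local instance] LieRing.ofAssociativeRing

theorem SemiconjBy.aeval {R A : Type*} [CommSemiring R] [Semiring A] [Algebra R A] {a x y : A}
    (h : SemiconjBy a x y) (p : R[X]) : SemiconjBy a (aeval x p) (aeval y p) := by
  induction p using Polynomial.induction_on with
  | C c => rw [aeval_C, aeval_C]; exact (Algebra.commutes c a).symm
  | add p q hp hq => simpa only [map_add] using hp.add_right hq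
  | monomial n c hn =>
    simpa only [map_mul, map_pow, aeval_X, pow_succ, mul_assoc] using hn.mul_right h

section DescPochhammer

variable {A : Type*} [Ring A]

theorem aeval_descPochhammer_eq_prod_range (x : A) (n : ℕ) :
    aeval x (descPochhammer ℤ n) = ((List.range n).map fun i : ℕ => x - i).prod := by
  induction n with
  | zero => simp
  | succ n ih => simp [descPochhammer_succ_right, List.range_succ, ih]

theorem aeval_descPochhammer_succ (x : A) (n : ℕ) :
    aeval x (descPochhammer ℤ (n + 1)) = x * aeval (x - 1) (descPochhammer ℤ n) := by
  simp [descPochhammer_succ_left, aeval_comp]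

end DescPochhammer

namespace Ring

variable {A : Type*} [Ring A] {e : A}

theorem lie_mul (a x y : A) : ⁅a, x * y⁆ = ⁅a, x⁆ * y + x * ⁅a, y⁆ := by
  simp only [lie_def]
  noncomm_ring

theorem lie_mem_span_singleton {x : A} (hx : x ∈ Ideal.span {e}) : ⁅e, x⁆ ∈ Ideal.span {e} := by
  obtain ⟨a, rfl⟩ := Ideal.mem_span_singleton'.mp hx
  exact Ideal.mem_span_singleton'.mpr ⟨⁅e, a⁆, by simp only [lie_def]; noncomm_ring⟩

theorem lie_aeval_mem_span_singleton {x y : A} (hxy : SemiconjBy e x y) (p : ℤ[X]) :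
    ⁅e, aeval x p⁆ ∈ Ideal.span {e} :=
  Ideal.mem_span_singleton'.mpr
    ⟨aeval y p - aeval x p, by rw [sub_mul, ← (hxy.aeval p).eq, lie_def]⟩

end Ring

section Sl2

variable {A : Type*} [Ring A] {e h f : A}

theorem semiconjBy_of_lie_eq_two_nsmul (hhe : ⁅h, e⁆ = 2 • e) : SemiconjBy e h (h - 2) := by
  rw [Ring.lie_def] at hhe
  rw [SemiconjBy, sub_mul, two_mul, ← two_nsmul, ← hhe]
  abel

theorem lie_pow_succ_eq_nsmul (hhf : ⁅h, f⁆ = -(2 • f)) (hef : ⁅e, f⁆ = h) (n : ℕ) :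
    ⁅e, f ^ (n + 1)⁆ = (n + 1) • (f ^ n * (h - n)) := by
  induction n with
  | zero => simp [hef]
  | succ n ih =>
    have hf : (h - n) * f = f * (h - n - 2) := by
      rw [Ring.lie_def, two_nsmul] at hhf
      rw [sub_mul, sub_eq_iff_eq_add.mp hhf, (Nat.cast_commute n f).eq]
      noncomm_ring
    rw [pow_succ, Ring.lie_mul, ih, hef, smul_mul_assoc, mul_assoc, hf, ← mul_assoc, ← pow_succ,
      ← mul_smul_comm, ← mul_smul_comm, ← mul_add]
    congr 1
    simp only [nsmul_eq_mul]
    push_cast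
    noncomm_ring

theorem lie_pow_mul_aeval_descPochhammer (hhf : ⁅h, f⁆ = -(2 • f)) (hef : ⁅e, f⁆ = h) (a j : ℕ) :
    ⁅e, f ^ (a + 1) * aeval (h - (a + 1 : ℕ)) (descPochhammer ℤ j)⁆ =
      (a + 1) • (f ^ a * aeval (h - a) (descPochhammer ℤ (j + 1))) +
        f ^ (a + 1) * ⁅e, aeval (h - (a + 1 : ℕ)) (descPochhammer ℤ j)⁆ := by
  rw [Ring.lie_mul, lie_pow_succ_eq_nsmul hhf hef, aeval_descPochhammer_succ, smul_mul_assoc,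
    mul_assoc, Nat.cast_succ, sub_add_eq_sub_sub]

theorem lie_iterate_pow_add_sub_mem_span_singleton (hhe : ⁅h, e⁆ = 2 • e)
    (hhf : ⁅h, f⁆ = -(2 • f)) (hef : ⁅e, f⁆ = h) (j a : ℕ) :
    (⁅e, ·⁆)^[j] (f ^ (a + j)) -
        (a + j).descFactorial j • (f ^ a * aeval (h - a) (descPochhammer ℤ j)) ∈
      Ideal.span {e} := by
  induction j generalizing a with
  | zero => simp
  | succ j ih =>
    set d := (a + 1 + j).descFactorial j
    have hcoef : (a + (j + 1)).descFactorial (j + 1) = d * (a + 1) := by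
      rw [← add_assoc, add_right_comm, Nat.descFactorial_succ, mul_comm]
      congr 2
      omega
    have key : ⁅e, (⁅e, ·⁆)^[j] (f ^ (a + 1 + j))⁆ -
          (d * (a + 1)) • (f ^ a * aeval (h - a) (descPochhammer ℤ (j + 1))) =
        ⁅e, (⁅e, ·⁆)^[j] (f ^ (a + 1 + j)) -
            d • (f ^ (a + 1) * aeval (h - (a + 1 : ℕ)) (descPochhammer ℤ j))⁆ +
          d • (f ^ (a + 1) * ⁅e, aeval (h - (a + 1 : ℕ)) (descPochhammer ℤ j)⁆) := by
      rw [lie_sub, lie_nsmul, lie_pow_mul_aeval_descPochhammer hhf hef, mul_smul, smul_add]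
      abel
    have he := (semiconjBy_of_lie_eq_two_nsmul hhe).sub_right (Nat.cast_commute (a + 1) e).symm
    rw [Function.iterate_succ_apply', hcoef, ← add_assoc, add_right_comm, key]
    exact add_mem (Ring.lie_mem_span_singleton (ih (a + 1)))
      (nsmul_mem (Ideal.mul_mem_left _ _ (Ring.lie_aeval_mem_span_singleton he _)) d)

theorem lie_iterate_pow_sub_factorial_nsmul_mem_span_singleton (hhe : ⁅h, e⁆ = 2 • e)
    (hhf : ⁅h, f⁆ = -(2 • f)) (hef : ⁅e, f⁆ = h) (m : ℕ) :
    (⁅e, ·⁆)^[m] (f ^ m) - m ! • aeval h (descPochhammer ℤ m) ∈ Ideal.span {e} := by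
  simpa [Nat.descFactorial_self] using lie_iterate_pow_add_sub_mem_span_singleton hhe hhf hef m 0

end Sl2

/-- **Lemma B.2(1) (lem-poly).**  For an `sl₂`-triple `(e, h, f)` in a Lie algebra `L` over `ℂ`,
in `U(L)` one has `(ad e)^m (f^m) − m! ⬝ h(h−1)⋯(h−m+1) ∈ U(L)·e`. -/
theorem adE_pow_F_pow_mem_left_ideal
    {L : Type*} [LieRing L] [LieAlgebra ℂ L] (e h f : L)
    (hhe : ⁅h, e⁆ = (2 : ℂ) • e) (hhf : ⁅h, f⁆ = (-2 : ℂ) • f) (hef : ⁅e, f⁆ = h)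
    (m : ℕ) :
    ∃ B : UniversalEnvelopingAlgebra ℂ L,
      (fun x => ιU e * x - x * ιU e)^[m] ((ιU f) ^ m)
          - m.factorial •
              ((List.range m).map
                (fun i : ℕ => ιU h - (i : UniversalEnvelopingAlgebra ℂ L))).prod
        = B * ιU e := by
  have hι : ∀ x y : L, ⁅ιU x, ιU y⁆ = ιU ⁅x, y⁆ := fun x y =>
    ((UniversalEnvelopingAlgebra.ι ℂ).map_lie x y).symm
  have hι_smul : ∀ (c : ℂ) (x : L), ιU (c • x) = c • ιU x :=
    (UniversalEnvelopingAlgebra.ι ℂ).map_smul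
  have hHE : ⁅ιU h, ιU e⁆ = 2 • ιU e := by rw [hι, hhe, hι_smul, two_smul, two_nsmul]
  have hHF : ⁅ιU h, ιU f⁆ = -(2 • ιU f) := by
    rw [hι, hhf, hι_smul, neg_smul, two_smul, two_nsmul]
  have hEF : ⁅ιU e, ιU f⁆ = ιU h := by rw [hι, hef]
  have hmem := lie_iterate_pow_sub_factorial_nsmul_mem_span_singleton hHE hHF hEF m
  rw [aeval_descPochhammer_eq_prod_range] at hmem
  obtain ⟨B, hB⟩ := Ideal.mem_span_singleton'.mp hmem
  exact ⟨B, hB.symm⟩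
end

section
/- Let L be a Lie algebra over ℂ and let e, h, f ∈ L satisfy [h,e] = 2e, [h,f] = −2f, [e,f] = h. Let n > r > 0 be integers and let Y ∈ U(L). Then in the universal enveloping algebra U(L) there exist elements A, B ∈ U(L) such that (ad e)ⁿ(f^r·Y) = f·A + (n!/(n−r)!) · (h−n+1)(h−n+2)⋯(h−n+r) · (ad e)^{n−r}(Y) + B·e, where ad e is the operator x ↦ ex − xe on U(L) and (h−n+1)⋯(h−n+r) is the product of the r elements h−n+j (1 ≤ j ≤ r) of U(L). -/
section SlTwoTriple

attribute [local instance 100] LieRing.ofAssociativeRing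

variable {R A : Type*} [CommRing R] [Ring A] [Algebra R A]

theorem Ring.lie_mul_s2 (a b c : A) : ⁅a, b * c⁆ = ⁅a, b⁆ * c + b * ⁅a, c⁆ := by
  simp only [Ring.lie_def]; noncomm_ring

theorem Ring.lie_smul_one (a : A) (c : R) : ⁅a, c • (1 : A)⁆ = 0 := by
  simp [Ring.lie_def]

theorem Ring.mul_eq_mul_add_lie (a x : A) : a * x = x * a + ⁅a, x⁆ := by
  rw [Ring.lie_def]; abel

variable (R) in
/-- `(H - n + 1)(H - n + 2)⋯(H - n + r)` -/
def descProd (H : A) (n r : ℕ) : A :=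
  ((List.range r).map (fun j : ℕ => H - ((n : R) - ((j : R) + 1)) • 1)).prod

theorem descProd_succ_succ (H : A) (m r : ℕ) :
    descProd R H (m + 1) (r + 1) = (H - (m : R) • 1) * descProd R H m r := by
  simp only [descProd, List.range_succ_eq_map, List.map_cons, List.prod_cons, List.map_map]
  congr 3
  · push_cast; ring
  · funext j; simp only [Function.comp_apply]; push_cast; ring_nf

variable {E H F : A}

theorem sub_smul_one_mul_eq_mul_sub_smul_one (hHF : ⁅H, F⁆ = (-2 : R) • F) (c : R) :
    (H - c • 1) * F = F * (H - (c + 2) • 1) := by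
  rw [Ring.lie_def] at hHF
  have : H * F = F * H + (-2 : R) • F := by rw [← hHF]; abel
  rw [sub_mul, mul_sub, this, smul_mul_assoc, mul_smul_comm, one_mul, mul_one]
  module

theorem iterate_lie_succ_mul_eq (hHE : ⁅H, E⁆ = (2 : R) • E) (hEF : ⁅E, F⁆ = H) (n : ℕ) (Z : A) :
    ∃ B, (fun x => ⁅E, x⁆)^[n + 1] (F * Z) =
      F * (fun x => ⁅E, x⁆)^[n + 1] Z + (n + 1) • ((H - (n : R) • 1) * (fun x => ⁅E, x⁆)^[n] Z)
        + B * E := by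
  induction n with
  | zero => exact ⟨0, by simp [Ring.lie_mul_s2, hEF, add_comm]⟩
  | succ n ih =>
    obtain ⟨B, hB⟩ := ih
    set W := (fun x => ⁅E, x⁆)^[n] Z
    have hEH : ⁅E, H⁆ = -((2 : R) • E) := by rw [← lie_skew, hHE]
    refine ⟨⁅E, B⁆ - (2 * (n + 1) : R) • W, ?_⟩
    rw [Function.iterate_succ_apply', hB, Function.iterate_succ_apply' _ (n + 1),
      Function.iterate_succ_apply' _ n]
    simp only [lie_add, lie_nsmul, Ring.lie_mul_s2, lie_sub, hEF, hEH, Ring.lie_smul_one, lie_self,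
      mul_zero, add_zero, sub_zero, neg_mul, smul_mul_assoc, Ring.mul_eq_mul_add_lie E W]
    push_cast
    simp only [mul_add, sub_mul, smul_mul_assoc, one_mul]
    module

variable (R) in
def rightLeftIdealSup (F E : A) : Submodule R A :=
  LinearMap.range (LinearMap.mulLeft R F) ⊔ LinearMap.range (LinearMap.mulRight R E)

theorem mem_rightLeftIdealSup {x : A} :
    x ∈ rightLeftIdealSup R F E ↔ ∃ a b, x = F * a + b * E := by
  simp only [rightLeftIdealSup, Submodule.mem_sup, LinearMap.mem_range, LinearMap.mulLeft_apply,
    LinearMap.mulRight_apply]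
  constructor
  · rintro ⟨_, ⟨a, rfl⟩, _, ⟨b, rfl⟩, rfl⟩; exact ⟨a, b, rfl⟩
  · rintro ⟨a, b, rfl⟩; exact ⟨_, ⟨a, rfl⟩, _, ⟨b, rfl⟩, rfl⟩

theorem sub_smul_one_mul_mem_rightLeftIdealSup (hHF : ⁅H, F⁆ = (-2 : R) • F) (c : R) {x : A}
    (hx : x ∈ rightLeftIdealSup R F E) : (H - c • 1) * x ∈ rightLeftIdealSup R F E := by
  obtain ⟨a, b, rfl⟩ := mem_rightLeftIdealSup.1 hx
  refine mem_rightLeftIdealSup.2 ⟨(H - (c + 2) • 1) * a, (H - c • 1) * b, ?_⟩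
  rw [mul_add, ← mul_assoc, sub_smul_one_mul_eq_mul_sub_smul_one hHF, mul_assoc, mul_assoc]

theorem iterate_lie_pow_mul_sub_mem (hHE : ⁅H, E⁆ = (2 : R) • E) (hHF : ⁅H, F⁆ = (-2 : R) • F)
    (hEF : ⁅E, F⁆ = H) {r n : ℕ} (hrn : r ≤ n) (Y : A) :
    (fun x => ⁅E, x⁆)^[n] (F ^ r * Y) -
      n.descFactorial r • (descProd R H n r * (fun x => ⁅E, x⁆)^[n - r] Y)
      ∈ rightLeftIdealSup R F E := by
  induction r generalizing n with
  | zero => simp [descProd]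
  | succ r ih =>
    obtain ⟨m, rfl⟩ : ∃ m, n = m + 1 := ⟨n - 1, by omega⟩
    obtain ⟨B, hB⟩ := iterate_lie_succ_mul_eq hHE hEF m (F ^ r * Y)
    have hIH := sub_smul_one_mul_mem_rightLeftIdealSup hHF (m : R) (ih (n := m) (by omega))
    rw [pow_succ', mul_assoc, hB, Nat.succ_sub_succ, Nat.succ_descFactorial_succ,
      descProd_succ_succ]
    convert add_mem (mem_rightLeftIdealSup.2 ⟨(fun x => ⁅E, x⁆)^[m + 1] (F ^ r * Y), B, rfl⟩)
      (Submodule.smul_of_tower_mem _ (m + 1) hIH) using 1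
    simp only [mul_sub, mul_smul_comm, mul_assoc, mul_nsmul, smul_sub]
    module

end SlTwoTriple

theorem ιU_lie {L : Type*} [LieRing L] [LieAlgebra ℂ L] (x y : L) :
    ιU ⁅x, y⁆ = ⁅ιU x, ιU y⁆ := by
  let := LieRing.ofAssociativeRing (A := UniversalEnvelopingAlgebra ℂ L)
  exact LieHom.map_lie _ x y

theorem adE_pow_F_pow_mul_mem_general
    {L : Type*} [LieRing L] [LieAlgebra ℂ L] (e h f : L)
    (hhe : ⁅h, e⁆ = (2 : ℂ) • e) (hhf : ⁅h, f⁆ = (-2 : ℂ) • f) (hef : ⁅e, f⁆ = h)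
    (n r : ℕ) (hrn : r < n) (Y : UniversalEnvelopingAlgebra ℂ L) :
    ∃ A B : UniversalEnvelopingAlgebra ℂ L,
      (fun x => ιU e * x - x * ιU e)^[n] ((ιU f) ^ r * Y)
        = ιU f * A
          + (n.descFactorial r) •
              (((List.range r).map
                  (fun j : ℕ => ιU h - ((n : ℂ) - ((j : ℂ) + 1)) • 1)).prod
                * (fun x => ιU e * x - x * ιU e)^[n - r] Y)
          + B * ιU e := by
  have hHE : ⁅ιU h, ιU e⁆ = (2 : ℂ) • ιU e := by rw [← ιU_lie, hhe, ιU, map_smul]; rfl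
  have hHF : ⁅ιU h, ιU f⁆ = (-2 : ℂ) • ιU f := by rw [← ιU_lie, hhf, ιU, map_smul]; rfl
  have hEF : ⁅ιU e, ιU f⁆ = ιU h := by rw [← ιU_lie, hef]
  obtain ⟨A, B, hAB⟩ :=
    mem_rightLeftIdealSup.1 (iterate_lie_pow_mul_sub_mem hHE hHF hEF hrn.le Y)
  exact ⟨A, B, (sub_eq_iff_eq_add.1 hAB).trans (by abel)⟩

/-- **Lemma B.2(3) (lem-poly).**  For an `sl₂`-triple `(e, h, f)` in a Lie algebra `L` over `ℂ`,
integers `n > r > 0` and `Y ∈ U(L)`, one has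
`(ad e)ⁿ(f^r·Y) ∈ f·U(L) + (n!/(n−r)!)(h−n+1)⋯(h−n+r)·(ad e)^{n−r}(Y) + U(L)·e`. -/
theorem adE_pow_F_pow_mul_mem
    {L : Type*} [LieRing L] [LieAlgebra ℂ L] (e h f : L)
    (hhe : ⁅h, e⁆ = (2 : ℂ) • e) (hhf : ⁅h, f⁆ = (-2 : ℂ) • f) (hef : ⁅e, f⁆ = h)
    (n r : ℕ) (hr : 0 < r) (hrn : r < n) (Y : UniversalEnvelopingAlgebra ℂ L) :
    ∃ A B : UniversalEnvelopingAlgebra ℂ L,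
      (fun x => ιU e * x - x * ιU e)^[n] ((ιU f) ^ r * Y)
        = ιU f * A
          + (n.descFactorial r) •
              (((List.range r).map
                  (fun j : ℕ => ιU h - ((n : ℂ) - ((j : ℂ) + 1)) • 1)).prod
                * (fun x => ιU e * x - x * ιU e)^[n - r] Y)
          + B * ιU e :=
  adE_pow_F_pow_mul_mem_general e h f hhe hhf hef n r hrn Y
end

section
/- For all natural numbers r ≤ n and every x ∈ ℂ, the following identity of falling factorials holds: (x−n+r)(x−n+r−1)⋯(x−n+1) = Σ_{i=0}^{r} (−1)^i · binom(r,i) · (n−r)(n−r−1)⋯(n−r−i+1) · (x−i)(x−i−1)⋯(x−r+1); that is, ∏_{j=0}^{r−1}(x−n+r−j) = Σ_{i=0}^{r} (−1)^i binom(r,i) · descFactorial(n−r, i) · ∏_{j=0}^{r−i−1}(x−i−j), where descFactorial(n−r, i) = (n−r)(n−r−1)⋯(n−r−i+1) is the descending factorial (equal to 0 when i > n−r) and the empty product equals 1. -/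
/-!
With `y = n - r`, the left side is the falling factorial `(x - y)_r`. The reflection
`(z)_k = (-1)^k (k - 1 - z)_k` rewrites it as `(-1)^r (y + (r - 1 - x))_r`, which the
Chu–Vandermonde identity expands into `Σ C(r,i) (y)_i (r - 1 - x)_{r-i}`; reflecting each
`(r - 1 - x)_{r-i}` back gives `(-1)^{r-i} (x - i)_{r-i}`.
-/

open Polynomial Finset

section

variable {R : Type*} [CommRing R]

theorem descPochhammer_int_smeval_eq_eval (k : ℕ) (r : R) :
    (descPochhammer ℤ k).smeval r = (descPochhammer R k).eval r := by
  rw [← descPochhammer_map (Int.castRingHom R), eval_map, ← eval₂_smulOneHom_eq_smeval]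
  congr
  exact RingHom.ext_int _ _

theorem descPochhammer_eval_add (r s : R) (k : ℕ) :
    (descPochhammer R k).eval (r + s) = ∑ ij ∈ antidiagonal k,
      k.choose ij.1 * ((descPochhammer R ij.1).eval r * (descPochhammer R ij.2).eval s) := by
  simpa only [descPochhammer_int_smeval_eq_eval] using
    Ring.descPochhammer_smeval_add k (Commute.all r s)

theorem descPochhammer_eval_eq_neg_one_pow_mul (k : ℕ) (z : R) :
    (descPochhammer R k).eval z = (-1) ^ k * (descPochhammer R k).eval ((k : R) - 1 - z) := by
  rw [← ascPochhammer_eval_neg_eq_descPochhammer, descPochhammer_eval_eq_ascPochhammer]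
  congr 1
  ring

theorem descPochhammer_eval_sub (x y : R) (r : ℕ) :
    (descPochhammer R r).eval (x - y) = ∑ i ∈ range (r + 1),
      (-1) ^ i * r.choose i * (descPochhammer R i).eval y *
        (descPochhammer R (r - i)).eval (x - i) := by
  have hsplit : (r : R) - 1 - (x - y) = y + ((r : R) - 1 - x) := by ring
  rw [descPochhammer_eval_eq_neg_one_pow_mul, hsplit, descPochhammer_eval_add,
    Nat.sum_antidiagonal_eq_sum_range_succ_mk, mul_sum]
  refine sum_congr rfl fun i hi => ?_
  have hir : i ≤ r := Nat.lt_succ_iff.mp (mem_range.mp hi)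
  have hreflect : (r : R) - 1 - x = ((r - i : ℕ) : R) - 1 - (x - i) := by
    rw [Nat.cast_sub hir]
    ring
  have hsign : (-1 : R) ^ r = (-1) ^ i * (-1) ^ (r - i) := by
    rw [← pow_add, Nat.add_sub_cancel' hir]
  rw [hreflect, descPochhammer_eval_eq_neg_one_pow_mul (r - i) (x - i), hsign]
  ring

end

/-- **Identity (B.8)/(eqn-identity).**  For natural numbers `r ≤ n` and `x ∈ ℂ`:
`(x−n+r)(x−n+r−1)⋯(x−n+1)
  = Σ_{i=0}^{r} (−1)^i C(r,i) (n−r)(n−r−1)⋯(n−r−i+1) (x−i)(x−i−1)⋯(x−r+1)`. -/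
theorem falling_factorial_identity (n r : ℕ) (hrn : r ≤ n) (x : ℂ) :
    (∏ j ∈ Finset.range r, (x - (n : ℂ) + (r : ℂ) - (j : ℂ))) =
      ∑ i ∈ Finset.range (r + 1),
        (-1) ^ i * (r.choose i : ℂ) * ((n - r).descFactorial i : ℂ) *
          ∏ j ∈ Finset.range (r - i), (x - (i : ℂ) - (j : ℂ)) := by
  have hshift : x - (n : ℂ) + r = x - ((n - r : ℕ) : ℂ) := by
    rw [Nat.cast_sub hrn]
    ring
  simp only [← descPochhammer_eval_eq_prod_range, ← descPochhammer_eval_eq_descFactorial ℂ]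
  rw [hshift, descPochhammer_eval_sub]
end

section
/- The set of pairs (x, y) ∈ ℂ × ℂ satisfying the three polynomial equations x(x−1) = 0, (1/3)(x+3y)(x+3y−1) + 3y = 0, and (2x+3y)(2x+3y+2) = 0 is exactly { (0, 0), (0, −2/3), (1, −4/3) }. -/
/-! The first and third equations leave the four candidates `x ∈ {0, 1}`, `2x + 3y ∈ {0, -2}`;
the second equation rules out exactly one of them, `(1, -2/3)`, where it evaluates to `-4/3`. -/

section

variable {R : Type*} [Ring R] [NoZeroDivisors R]

theorem mul_sub_one_eq_zero_iff (a : R) : a * (a - 1) = 0 ↔ a = 0 ∨ a = 1 := by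
  rw [mul_eq_zero, sub_eq_zero]

theorem mul_add_eq_zero_iff (a b : R) : a * (a + b) = 0 ↔ a = 0 ∨ a = -b := by
  rw [mul_eq_zero, add_eq_zero_iff_eq_neg]

end

/-- **Proposition 3.6(1).**  The common zeros in `ℂ²` of the polynomials
`x(x−1)`, `(1/3)(x+3y)(x+3y−1)+3y` and `(2x+3y)(2x+3y+2)` are exactly
`(0,0)`, `(0,−2/3)` and `(1,−4/3)`. -/
theorem common_zeros_level_minus_five_thirds :
    {p : ℂ × ℂ |
        p.1 * (p.1 - 1) = 0 ∧
        (1 / 3 : ℂ) * (p.1 + 3 * p.2) * (p.1 + 3 * p.2 - 1) + 3 * p.2 = 0 ∧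
        (2 * p.1 + 3 * p.2) * (2 * p.1 + 3 * p.2 + 2) = 0} =
      {((0 : ℂ), (0 : ℂ)), (0, -2 / 3), (1, -4 / 3)} := by
  ext ⟨x, y⟩
  simp only [Set.mem_ofPred_eq, Set.mem_insert_iff, Set.mem_singleton_iff, Prod.mk.injEq]
  constructor
  · rintro ⟨hx, hq, hs⟩
    rcases (mul_sub_one_eq_zero_iff x).1 hx with rfl | rfl <;>
      rcases (mul_add_eq_zero_iff _ 2).1 hs with hs | hs
    · exact Or.inl ⟨rfl, by linear_combination hs / 3⟩
    · exact Or.inr (Or.inl ⟨rfl, by linear_combination hs / 3⟩)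
    · have : (-4 / 3 : ℂ) = 0 := by linear_combination hq - (2 * 1 + 3 * y) / 3 * hs
      norm_num at this
    · exact Or.inr (Or.inr ⟨rfl, by linear_combination hs / 3⟩)
  · rintro (⟨rfl, rfl⟩ | ⟨rfl, rfl⟩ | ⟨rfl, rfl⟩) <;> norm_num
end

section
/- The set of pairs (x, y) ∈ ℂ × ℂ satisfying the three polynomial equations x(x−1)(x−2) = 0, (2/9)h₁₁(h₁₁−1)(h₁₁−2) + 6y·h₃₂ = 0, and (2/9)h₂₁(h₂₁−1)(h₂₁−2) + h₂₁(h₂₁−2) + 3y(y+2) = 0, where h₁₁ = x+3y, h₂₁ = 2x+3y, h₃₂ = x+2y, is exactly { (0, 0), (0, −2/3), (0, −1/3), (1, 0), (1, −4/3), (2, −5/3) }. -/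
/-!
The first polynomial forces `x ∈ {0, 1, 2}`. On each of these three lines the second
polynomial is `6 (y - a)(y - b)(y - c)` with explicit roots, which leaves nine candidate
points; the third polynomial vanishes at exactly six of them.
-/

/- The polynomials `p₁`, `p₂`, `q` of Lemma 3.4, in `x = μ(H₁₀)`, `y = μ(H₀₁)`. -/
def p₁ (x : ℂ) : ℂ := x * (x - 1) * (x - 2)

noncomputable def p₂ (x y : ℂ) : ℂ :=
  (2 / 9 : ℂ) * (x + 3 * y) * (x + 3 * y - 1) * (x + 3 * y - 2) + 6 * y * (x + 2 * y)

noncomputable def q (x y : ℂ) : ℂ :=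
  (2 / 9 : ℂ) * (2 * x + 3 * y) * (2 * x + 3 * y - 1) * (2 * x + 3 * y - 2)
    + (2 * x + 3 * y) * (2 * x + 3 * y - 2) + 3 * y * (y + 2)

theorem mul_sub_mul_sub_mul_sub_eq_zero_iff {R : Type*} [CommRing R] [NoZeroDivisors R]
    {c : R} (hc : c ≠ 0) {y a b d : R} :
    c * (y - a) * (y - b) * (y - d) = 0 ↔ y = a ∨ y = b ∨ y = d := by
  simp only [mul_eq_zero, hc, sub_eq_zero, false_or, or_assoc]

theorem p₁_eq_zero_iff {x : ℂ} : p₁ x = 0 ↔ x = 0 ∨ x = 1 ∨ x = 2 := by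
  rw [p₁, show x * (x - 1) * (x - 2) = 1 * (x - 0) * (x - 1) * (x - 2) by ring]
  exact mul_sub_mul_sub_mul_sub_eq_zero_iff one_ne_zero

theorem p₂_zero_eq_zero_iff {y : ℂ} : p₂ 0 y = 0 ↔ y = 0 ∨ y = -2 / 3 ∨ y = -1 / 3 := by
  rw [show p₂ 0 y = (6 : ℂ) * (y - 0) * (y - -2 / 3) * (y - -1 / 3) by rw [p₂]; ring]
  exact mul_sub_mul_sub_mul_sub_eq_zero_iff (by norm_num)

theorem p₂_one_eq_zero_iff {y : ℂ} : p₂ 1 y = 0 ↔ y = 0 ∨ y = -2 / 3 ∨ y = -4 / 3 := by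
  rw [show p₂ 1 y = (6 : ℂ) * (y - 0) * (y - -2 / 3) * (y - -4 / 3) by rw [p₂]; ring]
  exact mul_sub_mul_sub_mul_sub_eq_zero_iff (by norm_num)

theorem p₂_two_eq_zero_iff {y : ℂ} : p₂ 2 y = 0 ↔ y = 0 ∨ y = -4 / 3 ∨ y = -5 / 3 := by
  rw [show p₂ 2 y = (6 : ℂ) * (y - 0) * (y - -4 / 3) * (y - -5 / 3) by rw [p₂]; ring]
  exact mul_sub_mul_sub_mul_sub_eq_zero_iff (by norm_num)

theorem eq_of_p₂_one_eq_zero_of_q_one_eq_zero {y : ℂ} (h₂ : p₂ 1 y = 0) (hq : q 1 y = 0) :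
    y = 0 ∨ y = -4 / 3 := by
  obtain rfl | rfl | rfl := p₂_one_eq_zero_iff.1 h₂
  · exact .inl rfl
  · norm_num [q] at hq
  · exact .inr rfl

theorem eq_of_p₂_two_eq_zero_of_q_two_eq_zero {y : ℂ} (h₂ : p₂ 2 y = 0) (hq : q 2 y = 0) :
    y = -5 / 3 := by
  obtain rfl | rfl | rfl := p₂_two_eq_zero_iff.1 h₂
  · norm_num [q] at hq
  · norm_num [q] at hq
  · rfl

/-- **Proposition 3.6(2).**  With `h₁₁ = x+3y`, `h₂₁ = 2x+3y`, `h₃₂ = x+2y`, the common zeros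
in `ℂ²` of `x(x−1)(x−2)`, `(2/9)h₁₁(h₁₁−1)(h₁₁−2)+6y·h₃₂` and
`(2/9)h₂₁(h₂₁−1)(h₂₁−2)+h₂₁(h₂₁−2)+3y(y+2)` are exactly
`(0,0), (0,−2/3), (0,−1/3), (1,0), (1,−4/3), (2,−5/3)`. -/
theorem common_zeros_level_minus_four_thirds :
    {p : ℂ × ℂ |
        p.1 * (p.1 - 1) * (p.1 - 2) = 0 ∧
        (2 / 9 : ℂ) * (p.1 + 3 * p.2) * (p.1 + 3 * p.2 - 1) * (p.1 + 3 * p.2 - 2)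
            + 6 * p.2 * (p.1 + 2 * p.2) = 0 ∧
        (2 / 9 : ℂ) * (2 * p.1 + 3 * p.2) * (2 * p.1 + 3 * p.2 - 1) * (2 * p.1 + 3 * p.2 - 2)
            + (2 * p.1 + 3 * p.2) * (2 * p.1 + 3 * p.2 - 2)
            + 3 * p.2 * (p.2 + 2) = 0} =
      {((0 : ℂ), (0 : ℂ)), (0, -2 / 3), (0, -1 / 3), (1, 0), (1, -4 / 3), (2, -5 / 3)} := by
  ext ⟨x, y⟩
  change p₁ x = 0 ∧ p₂ x y = 0 ∧ q x y = 0 ↔ _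
  simp only [Set.mem_insert_iff, Set.mem_singleton_iff, Prod.mk.injEq]
  constructor
  · rintro ⟨h₁, h₂, hq⟩
    obtain rfl | rfl | rfl := p₁_eq_zero_iff.1 h₁
    · obtain rfl | rfl | rfl := p₂_zero_eq_zero_iff.1 h₂ <;> norm_num
    · obtain rfl | rfl := eq_of_p₂_one_eq_zero_of_q_one_eq_zero h₂ hq <;> norm_num
    · obtain rfl := eq_of_p₂_two_eq_zero_of_q_two_eq_zero h₂ hq
      norm_num
  · rintro (⟨rfl, rfl⟩ | ⟨rfl, rfl⟩ | ⟨rfl, rfl⟩ | ⟨rfl, rfl⟩ | ⟨rfl, rfl⟩ | ⟨rfl, rfl⟩) <;>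
      norm_num [p₁, p₂, q]
end

section
/- The set of pairs (x, y) ∈ ℂ × ℂ satisfying the three polynomial equations p₁ = 0, p₂ = 0, q = 0, where (writing h₂₁ = 2x+3y, h₁₁ = x+3y, h₃₁ = x+y): q = (2/27)h₂₁(h₂₁−1)(h₂₁−2)(h₂₁−3)(h₂₁−4) + (5/9)h₂₁(h₂₁−2)(h₂₁−3)(h₂₁−4) + (h₂₁−3)(h₂₁−4)y(y+2) + 2h₂₁(h₂₁−4)(h₁₁−1) + 2(h₂₁−4)x(x−1) − 6(h₂₁−4)y(y+1) + 6(h₂₁−3)y(y+2); p₁ = x(x−1)(x−2)(x−3)(x−4); p₂ = (2/27)h₁₁(h₁₁−1)(h₁₁−2)(h₁₁−3)(h₁₁−4) + (5/3)(h₁₁−2)(h₁₁−3)(h₁₁−4)y + (h₁₁−3)(h₁₁−4)y(h₃₁+2) + 18(h₁₁−4)y(y−1) − 2(h₁₁−3)(h₁₁−4)y + 18y(y−1)(h₃₁+2); is exactly { (0,0), (0,−2/3), (0,−1/3), (0,1/3), (0,1), (1,0), (1,−4/3), (1,−2/3), (2,0), (2,−5/3), (2,−4/3), (4,−7/3) }.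 -/
/-!
Since `p₁` only involves `x`, a common zero lies on one of the lines `x = 0, 1, 2, 3, 4`.
On each line `p₂` and `q` become quintics in `y`, whose common roots are those of their gcd,
an explicit combination of the two (a Bézout certificate): on `x = 0` the quintic `p₂`
already splits into the five roots, on `x = 1` and `x = 2` the gcd is a cubic with three
rational roots, on `x = 3` it is `1`, and on `x = 4` it is `y + 7/3`. Conversely, the twelve
points are checked directly.
-/

section ProductOfLinearFactors

variable {R : Type*} [Ring R] [NoZeroDivisors R] {y a b c d e : R}

theorem eq_or_eq_or_eq_of_mul_sub_eq_zero (h : (y - a) * (y - b) * (y - c) = 0) :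
    y = a ∨ y = b ∨ y = c := by
  simp only [mul_eq_zero, sub_eq_zero] at h
  tauto

theorem eq_or_eq_or_eq_or_eq_or_eq_of_mul_sub_eq_zero
    (h : (y - a) * (y - b) * (y - c) * (y - d) * (y - e) = 0) :
    y = a ∨ y = b ∨ y = c ∨ y = d ∨ y = e := by
  simp only [mul_eq_zero, sub_eq_zero] at h
  tauto

end ProductOfLinearFactors

namespace AffineG2

variable {K : Type*} [Field K]

def p₁ (x : K) : K :=
  x * (x - 1) * (x - 2) * (x - 3) * (x - 4)

def p₂ (x y : K) : K :=
  (2 / 27 : K) * (x + 3 * y) * (x + 3 * y - 1) * (x + 3 * y - 2)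
        * (x + 3 * y - 3) * (x + 3 * y - 4)
      + (5 / 3 : K) * (x + 3 * y - 2) * (x + 3 * y - 3) * (x + 3 * y - 4) * y
      + (x + 3 * y - 3) * (x + 3 * y - 4) * y * (x + y + 2)
      + 18 * (x + 3 * y - 4) * y * (y - 1)
      - 2 * (x + 3 * y - 3) * (x + 3 * y - 4) * y
      + 18 * y * (y - 1) * (x + y + 2)

def q (x y : K) : K :=
  (2 / 27 : K) * (2 * x + 3 * y) * (2 * x + 3 * y - 1) * (2 * x + 3 * y - 2)
        * (2 * x + 3 * y - 3) * (2 * x + 3 * y - 4)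
      + (5 / 9 : K) * (2 * x + 3 * y) * (2 * x + 3 * y - 2)
        * (2 * x + 3 * y - 3) * (2 * x + 3 * y - 4)
      + (2 * x + 3 * y - 3) * (2 * x + 3 * y - 4) * y * (y + 2)
      + 2 * (2 * x + 3 * y) * (2 * x + 3 * y - 4) * (x + 3 * y - 1)
      + 2 * (2 * x + 3 * y - 4) * x * (x - 1)
      - 6 * (2 * x + 3 * y - 4) * y * (y + 1)
      + 6 * (2 * x + 3 * y - 3) * y * (y + 2)

variable {x y : K}

theorem eq_of_p₁_eq_zero (h : p₁ x = 0) : x = 0 ∨ x = 1 ∨ x = 2 ∨ x = 3 ∨ x = 4 :=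
  eq_or_eq_or_eq_or_eq_or_eq_of_mul_sub_eq_zero (by unfold p₁ at h; linear_combination h)

variable [CharZero K]

theorem eq_of_p₂_zero_eq_zero (h : p₂ 0 y = 0) :
    y = 0 ∨ y = -2 / 3 ∨ y = -1 / 3 ∨ y = 1 / 3 ∨ y = 1 :=
  eq_or_eq_or_eq_or_eq_or_eq_of_mul_sub_eq_zero (by unfold p₂ at h; linear_combination h / 18)

theorem eq_of_p₂_one_eq_zero_of_q_one_eq_zero (h₂ : p₂ 1 y = 0) (hq : q 1 y = 0) :
    y = 0 ∨ y = -4 / 3 ∨ y = -2 / 3 := by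
  apply eq_or_eq_or_eq_of_mul_sub_eq_zero
  unfold p₂ q at *
  linear_combination (-19 / 198 - 5 / 66 * y) * h₂ + (-1 / 33 + 5 / 66 * y) * hq

theorem eq_of_p₂_two_eq_zero_of_q_two_eq_zero (h₂ : p₂ 2 y = 0) (hq : q 2 y = 0) :
    y = 0 ∨ y = -5 / 3 ∨ y = -4 / 3 := by
  apply eq_or_eq_or_eq_of_mul_sub_eq_zero
  unfold p₂ q at *
  linear_combination (-13 / 72 - 5 / 72 * y) * h₂ + (-11 / 216 + 5 / 72 * y) * hq

theorem q_three_ne_zero_of_p₂_three_eq_zero (h₂ : p₂ 3 y = 0) : q 3 y ≠ 0 := by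
  intro hq
  unfold p₂ q at *
  have : (1 : K) = 0 := by
    linear_combination
      (-12780113 / 1226456 - 133811 / 3982 * y - 5206119 / 153307 * y ^ 2
          - 16214193 / 1226456 * y ^ 3 - 1038285 / 613228 * y ^ 4) * h₂
        + (3 / 616 - 4586783 / 1226456 * y + 1417197 / 1226456 * y ^ 2
          + 833049 / 175208 * y ^ 3 + 1038285 / 613228 * y ^ 4) * hq
  exact one_ne_zero this

theorem eq_of_p₂_four_eq_zero_of_q_four_eq_zero (h₂ : p₂ 4 y = 0) (hq : q 4 y = 0) :
    y = -7 / 3 := by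
  unfold p₂ q at *
  linear_combination
    (-1609 / 11872 - 2619 / 11872 * y - 2115 / 23744 * y ^ 2 - 243 / 23744 * y ^ 3) * h₂
      + (3 / 1696 - 165 / 11872 * y + 495 / 23744 * y ^ 2 + 243 / 23744 * y ^ 3) * hq

theorem commonZero_iff :
    p₁ x = 0 ∧ p₂ x y = 0 ∧ q x y = 0 ↔
      x = 0 ∧ y = 0 ∨ x = 0 ∧ y = -2 / 3 ∨ x = 0 ∧ y = -1 / 3 ∨ x = 0 ∧ y = 1 / 3 ∨
        x = 0 ∧ y = 1 ∨ x = 1 ∧ y = 0 ∨ x = 1 ∧ y = -4 / 3 ∨ x = 1 ∧ y = -2 / 3 ∨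
        x = 2 ∧ y = 0 ∨ x = 2 ∧ y = -5 / 3 ∨ x = 2 ∧ y = -4 / 3 ∨ x = 4 ∧ y = -7 / 3 := by
  constructor
  · rintro ⟨h₁, h₂, hq⟩
    rcases eq_of_p₁_eq_zero h₁ with rfl | rfl | rfl | rfl | rfl
    · rcases eq_of_p₂_zero_eq_zero h₂ with rfl | rfl | rfl | rfl | rfl <;> norm_num
    · rcases eq_of_p₂_one_eq_zero_of_q_one_eq_zero h₂ hq with rfl | rfl | rfl <;> norm_num
    · rcases eq_of_p₂_two_eq_zero_of_q_two_eq_zero h₂ hq with rfl | rfl | rfl <;> norm_num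
    · exact absurd hq (q_three_ne_zero_of_p₂_three_eq_zero h₂)
    · obtain rfl := eq_of_p₂_four_eq_zero_of_q_four_eq_zero h₂ hq
      norm_num
  · rintro (⟨rfl, rfl⟩ | ⟨rfl, rfl⟩ | ⟨rfl, rfl⟩ | ⟨rfl, rfl⟩ | ⟨rfl, rfl⟩ | ⟨rfl, rfl⟩ |
      ⟨rfl, rfl⟩ | ⟨rfl, rfl⟩ | ⟨rfl, rfl⟩ | ⟨rfl, rfl⟩ | ⟨rfl, rfl⟩ | ⟨rfl, rfl⟩) <;>
    norm_num [p₁, p₂, q]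

end AffineG2

/-- **Proposition 3.6(3).**  With `h₂₁ = 2x+3y`, `h₁₁ = x+3y`, `h₃₁ = x+y`, the common zeros
in `ℂ²` of the three polynomials `p₁`, `p₂`, `q` of Lemma 3.5 are exactly the twelve points
`(0,0), (0,−2/3), (0,−1/3), (0,1/3), (0,1), (1,0), (1,−4/3), (1,−2/3), (2,0), (2,−5/3),
(2,−4/3), (4,−7/3)`. -/
theorem common_zeros_level_minus_two_thirds :
    {p : ℂ × ℂ |
        p.1 * (p.1 - 1) * (p.1 - 2) * (p.1 - 3) * (p.1 - 4) = 0 ∧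
        (2 / 27 : ℂ) * (p.1 + 3 * p.2) * (p.1 + 3 * p.2 - 1) * (p.1 + 3 * p.2 - 2)
              * (p.1 + 3 * p.2 - 3) * (p.1 + 3 * p.2 - 4)
            + (5 / 3 : ℂ) * (p.1 + 3 * p.2 - 2) * (p.1 + 3 * p.2 - 3) * (p.1 + 3 * p.2 - 4) * p.2
            + (p.1 + 3 * p.2 - 3) * (p.1 + 3 * p.2 - 4) * p.2 * (p.1 + p.2 + 2)
            + 18 * (p.1 + 3 * p.2 - 4) * p.2 * (p.2 - 1)
            - 2 * (p.1 + 3 * p.2 - 3) * (p.1 + 3 * p.2 - 4) * p.2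
            + 18 * p.2 * (p.2 - 1) * (p.1 + p.2 + 2) = 0 ∧
        (2 / 27 : ℂ) * (2 * p.1 + 3 * p.2) * (2 * p.1 + 3 * p.2 - 1) * (2 * p.1 + 3 * p.2 - 2)
              * (2 * p.1 + 3 * p.2 - 3) * (2 * p.1 + 3 * p.2 - 4)
            + (5 / 9 : ℂ) * (2 * p.1 + 3 * p.2) * (2 * p.1 + 3 * p.2 - 2)
              * (2 * p.1 + 3 * p.2 - 3) * (2 * p.1 + 3 * p.2 - 4)
            + (2 * p.1 + 3 * p.2 - 3) * (2 * p.1 + 3 * p.2 - 4) * p.2 * (p.2 + 2)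
            + 2 * (2 * p.1 + 3 * p.2) * (2 * p.1 + 3 * p.2 - 4) * (p.1 + 3 * p.2 - 1)
            + 2 * (2 * p.1 + 3 * p.2 - 4) * p.1 * (p.1 - 1)
            - 6 * (2 * p.1 + 3 * p.2 - 4) * p.2 * (p.2 + 1)
            + 6 * (2 * p.1 + 3 * p.2 - 3) * p.2 * (p.2 + 2) = 0} =
      {((0 : ℂ), (0 : ℂ)), (0, -2 / 3), (0, -1 / 3), (0, 1 / 3), (0, 1),
        (1, 0), (1, -4 / 3), (1, -2 / 3), (2, 0), (2, -5 / 3), (2, -4 / 3), (4, -7 / 3)} := by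
  ext ⟨x, y⟩
  simp only [Set.mem_ofPred_eq, Set.mem_insert_iff, Set.mem_singleton_iff, Prod.mk.injEq]
  exact AffineG2.commonZero_iff
end
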